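/- arXiv:2205.03507 — 2 statements merged into one kernel-verified Lean document; each statement's English description precedes it below -/
import Mathlib

section
/- Let r ≥ 2 be an integer radix, D ≥ 1, and m ≥ 1. Let (x_k)_{k∈ℕ} be a sequence in ℝ^m (equipped with the sup norm ‖·‖_∞) that is Fejér monotone with respect to the single point x ∈ ℝ^m, i.e. ‖x_{k+1} − x‖_∞ ≤ ‖x_k − x‖_∞ for all k, and assume |x_j| ≤ 1 − 2·r^{-D} for every coordinate j. If some element n satisfies ‖x_n − x‖_∞ ≤ r^{-D}/2, then for every coordinate j there exist symmetric maximally redundant signed-digit radix-r digit sequences d^{(k,j)} : ℕ → ℤ for each k ≥ n with |d^{(k,j)}_i| ≤ r − 1 for all i, (x_k)_j = Σ_{i=0}^∞ d^{(k,j)}_i · r^{-(i+1)}, and d^{(k,j)}_i = d^{(n,j)}_i for all i < D and all k ≥ n. -/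
/-!
Round `xs j * r ^ D` to an integer `N`; the margin in `hxs` gives `|N| < r ^ D`, and by Fejér
monotonicity every `x k` with `k ≥ n` satisfies `|x k j * r ^ D - N| ≤ 1`. Every real in
`[-1, 1]` has an expansion, and splitting off the leading digit of `N` shows inductively that all
reals `y` with `|y * r ^ D - N| ≤ 1` have expansions whose first `D` digits depend on `N` only.
-/

open Finset

def IsSignedDigitExpansion (r : ℕ) (d : ℕ → ℤ) (s : ℝ) : Prop :=
  (∀ i, |d i| ≤ (r : ℤ) - 1) ∧ HasSum (fun i : ℕ => (d i : ℝ) * (r : ℝ) ^ (-(i + 1 : ℤ))) s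

theorem zpow_neg_natCast_add_one {G : Type*} [DivisionMonoid G] (a : G) (i : ℕ) :
    a ^ (-(i + 1 : ℤ)) = a⁻¹ ^ (i + 1) := by
  rw [← zpow_natCast, inv_zpow', Nat.cast_succ]

theorem summable_digit_terms {r : ℕ} (hr : 1 < r) {d : ℕ → ℤ} (hd : ∀ i, |d i| ≤ (r : ℤ) - 1) :
    Summable fun i : ℕ => (d i : ℝ) * (r : ℝ) ^ (-(i + 1 : ℤ)) := by
  have hr0 : (0 : ℝ) < r := by positivity
  refine .of_norm_bounded (summable_geometric_of_lt_one (by positivity)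
    (inv_lt_one_of_one_lt₀ (by exact_mod_cast hr))) fun i => ?_
  have hdr : |(d i : ℝ)| ≤ r := by
    rw [← Int.cast_abs]
    exact_mod_cast (hd i).trans (by omega)
  rw [norm_mul, zpow_neg_natCast_add_one, norm_pow, norm_inv, Real.norm_natCast,
    Real.norm_eq_abs]
  calc |(d i : ℝ)| * (r : ℝ)⁻¹ ^ (i + 1) ≤ r * (r : ℝ)⁻¹ ^ (i + 1) := by gcongr
    _ = (r : ℝ)⁻¹ ^ i := by rw [pow_succ]; field_simp

namespace IsSignedDigitExpansion

variable {r : ℕ} {d : ℕ → ℤ} {s : ℝ}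

theorem neg (h : IsSignedDigitExpansion r d s) : IsSignedDigitExpansion r (-d) (-s) :=
  ⟨fun i => by simpa using h.1 i, by simpa [neg_mul] using h.2.neg⟩

theorem cons {c : ℤ} (hc : |c| ≤ (r : ℤ) - 1) (h : IsSignedDigitExpansion r d s) :
    IsSignedDigitExpansion r (Stream'.cons c d) ((c + s) / r) := by
  refine ⟨fun i => ?_, (hasSum_nat_add_iff' 1).1 ?_⟩
  · cases i
    exacts [hc, h.1 _]
  · have key := h.2.div_const (r : ℝ)
    simp only [zpow_neg_natCast_add_one, sum_range_one, Stream'.cons, pow_succ] at key ⊢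
    rw [show ((c : ℝ) + s) / r - c * ((r : ℝ)⁻¹ ^ 0 * (r : ℝ)⁻¹) = s / r by ring]
    simpa only [div_eq_mul_inv, mul_assoc] using key

theorem of_approx (hr : 1 < r) {a : ℕ → ℤ} (h0 : a 0 = 0)
    (hdig : ∀ i, |a (i + 1) - r * a i| ≤ (r : ℤ) - 1) (happrox : ∀ i, |a i - s * r ^ i| ≤ 1) :
    IsSignedDigitExpansion r (fun i => a (i + 1) - r * a i) s := by
  have hr0 : (0 : ℝ) < r := by positivity
  have hq : (r : ℝ)⁻¹ < 1 := inv_lt_one_of_one_lt₀ (by exact_mod_cast hr)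
  refine ⟨hdig, ?_⟩
  have hterm (i : ℕ) : ((a (i + 1) - r * a i : ℤ) : ℝ) * (r : ℝ) ^ (-(i + 1 : ℤ))
      = a (i + 1) * (r : ℝ)⁻¹ ^ (i + 1) - a i * (r : ℝ)⁻¹ ^ i := by
    rw [zpow_neg_natCast_add_one, pow_succ]
    push_cast
    field_simp
  rw [(summable_digit_terms hr hdig).hasSum_iff_tendsto_nat]
  simp_rw [hterm, sum_range_sub (fun i => (a i : ℝ) * (r : ℝ)⁻¹ ^ i), h0, Int.cast_zero,
    zero_mul, sub_zero]
  refine tendsto_iff_norm_sub_tendsto_zero.2 (squeeze_zero (fun _ => norm_nonneg _) (fun n => ?_)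
    (tendsto_pow_atTop_nhds_zero_of_lt_one (by positivity) hq))
  have hsplit : a n * (r : ℝ)⁻¹ ^ n - s = (a n - s * r ^ n) * (r : ℝ)⁻¹ ^ n := by
    rw [sub_mul, mul_assoc, ← mul_pow, mul_inv_cancel₀ hr0.ne', one_pow, mul_one]
  rw [hsplit, norm_mul, norm_pow, norm_inv, Real.norm_natCast, Real.norm_eq_abs]
  exact mul_le_of_le_one_left (by positivity) (happrox n)

end IsSignedDigitExpansion

section

variable {r : ℕ} {s : ℝ}

theorem exists_isSignedDigitExpansion_of_pos (hr : 1 < r) (hs₀ : 0 < s) (hs₁ : s ≤ 1) :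
    ∃ d, IsSignedDigitExpansion r d s := by
  have hr0 : (0 : ℝ) < r := by positivity
  -- `⌈·⌉ - 1` rather than `⌊·⌋`, so that `a 0 = 0` also for `s = 1`.
  refine ⟨_, .of_approx hr (a := fun i => ⌈s * r ^ i⌉ - 1) ?_ (fun i => ?_) (fun i => ?_)⟩
  · simp only [pow_zero, mul_one, sub_eq_zero, Int.ceil_eq_iff]
    norm_num
    exact ⟨hs₀, hs₁⟩
  · have h1 : ⌈s * r ^ (i + 1)⌉ ≤ r * ⌈s * r ^ i⌉ :=
      Int.ceil_le.2 (by push_cast; rw [pow_succ]; nlinarith [Int.le_ceil (s * r ^ i)])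
    have h2 : r * ⌈s * r ^ i⌉ - r < ⌈s * r ^ (i + 1)⌉ :=
      Int.lt_ceil.2 (by push_cast; rw [pow_succ]; nlinarith [Int.ceil_lt_add_one (s * r ^ i)])
    rw [abs_le]
    constructor <;> linarith
  · have h1 := Int.le_ceil (s * r ^ i)
    have h2 := Int.ceil_lt_add_one (s * r ^ i)
    rw [abs_le]
    push_cast
    constructor <;> linarith

theorem exists_isSignedDigitExpansion (hr : 1 < r) (hs : |s| ≤ 1) :
    ∃ d, IsSignedDigitExpansion r d s := by
  rcases lt_trichotomy s 0 with hneg | rfl | hpos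
  · obtain ⟨d, hd⟩ :=
      exists_isSignedDigitExpansion_of_pos hr (neg_pos.2 hneg) (by linarith [neg_abs_le s])
    exact ⟨-d, by simpa using hd.neg⟩
  · exact ⟨0, fun _ => by simp; omega, by simp⟩
  · exact exists_isSignedDigitExpansion_of_pos hr hpos ((le_abs_self s).trans hs)

end

theorem exists_common_digit_prefix {r : ℕ} (hr : 1 < r) : ∀ (D : ℕ) (N : ℤ), N.natAbs < r ^ D →
    ∃ e : ℕ → ℤ, ∀ y : ℝ, |y * r ^ D - N| ≤ 1 →
      ∃ d, IsSignedDigitExpansion r d y ∧ ∀ i < D, d i = e i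
  | 0, N, hN => by
    obtain rfl : N = 0 := by simpa using hN
    refine ⟨0, fun y hy => ?_⟩
    obtain ⟨d, hd⟩ := exists_isSignedDigitExpansion hr (by simpa using hy)
    exact ⟨d, hd, by simp⟩
  | D + 1, N, hN => by
    have hrD : ((r ^ D : ℕ) : ℤ).natAbs = r ^ D := Int.natAbs_natCast _
    set c := N.tdiv (r ^ D : ℕ)
    set N' := N.tmod (r ^ D : ℕ)
    have hc : |c| ≤ (r : ℤ) - 1 := by
      have : c.natAbs < r := by
        rw [Int.natAbs_tdiv, hrD]
        exact Nat.div_lt_of_lt_mul (by rwa [← pow_succ])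
      rw [Int.abs_eq_natAbs]
      omega
    have hN' : N'.natAbs < r ^ D := by
      rw [Int.natAbs_tmod, hrD]
      exact Nat.mod_lt _ (by positivity)
    obtain ⟨e, he⟩ := exists_common_digit_prefix hr D N' hN'
    refine ⟨Stream'.cons c e, fun y hy => ?_⟩
    have hsplit : N' + c * (r ^ D : ℕ) = N := Int.tmod_add_tdiv_mul _ _
    obtain ⟨d, hd, hde⟩ := he (y * r - c) (by
      rw [← hsplit] at hy
      push_cast at hy
      convert hy using 2
      ring)
    refine ⟨Stream'.cons c d, ?_, ?_⟩
    · convert hd.cons hc using 1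
      field_simp
      ring
    · rintro (_ | i) hi
      · rfl
      · exact hde i (by omega)

theorem natAbs_round_lt {α : Type*} [Field α] [LinearOrder α] [IsStrictOrderedRing α] [FloorRing α]
    {z : α} {M : ℕ} (h : |z| + 1 / 2 < M) : (round z).natAbs < M := by
  have h₁ := abs_sub_abs_le_abs_sub (round z : α) z
  rw [abs_sub_comm] at h₁
  have : ((round z).natAbs : α) < M := by
    rw [Nat.cast_natAbs, Int.cast_abs]
    linarith [abs_sub_round z]
  exact_mod_cast this

theorem abs_mul_sub_round_mul_le {y z P : ℝ} (hP : 0 < P) (h : |y - z| ≤ P⁻¹ / 2) :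
    |y * P - round (z * P)| ≤ 1 :=
  calc |y * P - round (z * P)| = |(y - z) * P + (z * P - round (z * P))| := by
        congr 1
        ring
    _ ≤ |y - z| * P + |z * P - round (z * P)| :=
        (abs_add_le _ _).trans_eq (by rw [abs_mul, abs_of_pos hP])
    _ ≤ P⁻¹ / 2 * P + 1 / 2 := by gcongr; exact abs_sub_round _
    _ = 1 := by field_simp; norm_num

theorem fejer_monotone_digit_stability_vector_general
    (r D m : ℕ) (hr : 2 ≤ r)
    (x : ℕ → (Fin m → ℝ)) (xs : Fin m → ℝ)
    (hfejer : ∀ k : ℕ, ‖x (k + 1) - xs‖ ≤ ‖x k - xs‖)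
    (hxs : ∀ j : Fin m, |xs j| ≤ 1 - 2 * (r : ℝ) ^ (-(D : ℤ)))
    (n : ℕ) (hn : ‖x n - xs‖ ≤ (r : ℝ) ^ (-(D : ℤ)) / 2) :
    ∀ j : Fin m, ∃ d : ℕ → ℕ → ℤ, ∀ k : ℕ, n ≤ k →
      (∀ i, |d k i| ≤ (r : ℤ) - 1) ∧
      HasSum (fun i : ℕ => (d k i : ℝ) * (r : ℝ) ^ (-(i + 1 : ℤ))) (x k j) ∧
      (∀ i < D, d k i = d n i) := by
  intro j
  have hP : (0 : ℝ) < r ^ D := by positivity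
  rw [zpow_neg, zpow_natCast] at hxs hn
  have hN : (round (xs j * r ^ D)).natAbs < r ^ D := by
    refine natAbs_round_lt ?_
    have := mul_le_mul_of_nonneg_right (hxs j) hP.le
    rw [sub_mul, one_mul, mul_assoc, inv_mul_cancel₀ hP.ne'] at this
    rw [abs_mul, abs_of_pos hP]
    push_cast
    linarith
  obtain ⟨e, he⟩ := exists_common_digit_prefix (by omega) D _ hN
  have hclose (k : ℕ) (hk : n ≤ k) : |x k j * r ^ D - round (xs j * r ^ D)| ≤ 1 := by
    refine abs_mul_sub_round_mul_le hP ?_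
    have hdist : ‖x k - xs‖ ≤ ‖x n - xs‖ :=
      antitone_nat_of_succ_le (f := fun k => ‖x k - xs‖) hfejer hk
    simpa only [Pi.sub_apply, Real.norm_eq_abs] using
      (norm_le_pi_norm (x k - xs) j).trans (hdist.trans hn)
  choose! d hd using fun k hk => he (x k j) (hclose k hk)
  refine ⟨d, fun k hk => ?_⟩
  obtain ⟨⟨hdig, hsum⟩, hpre⟩ := hd k hk
  exact ⟨hdig, hsum, fun i hi => (hpre i hi).trans ((hd n le_rfl).2 i hi).symm⟩

/-- Theorem 1 of the paper, vector case: a sequence in `ℝ^m` (with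
the sup norm) that is Fejér monotone with respect to the point `x` develops `D`
stable most-significant digits in every coordinate, in the symmetric maximally
redundant signed-digit radix-`r` representation, once an element comes within
`r^(-D)/2` of `x` in the sup norm. -/
theorem fejer_monotone_digit_stability_vector
    (r D m : ℕ) (hr : 2 ≤ r) (hD : 1 ≤ D) (hm : 1 ≤ m)
    (x : ℕ → (Fin m → ℝ)) (xs : Fin m → ℝ)
    (hfejer : ∀ k : ℕ, ‖x (k + 1) - xs‖ ≤ ‖x k - xs‖)
    (hxs : ∀ j : Fin m, |xs j| ≤ 1 - 2 * (r : ℝ) ^ (-(D : ℤ)))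
    (n : ℕ) (hn : ‖x n - xs‖ ≤ (r : ℝ) ^ (-(D : ℤ)) / 2) :
    ∀ j : Fin m, ∃ d : ℕ → ℕ → ℤ, ∀ k : ℕ, n ≤ k →
      (∀ i, |d k i| ≤ (r : ℤ) - 1) ∧
      HasSum (fun i : ℕ => (d k i : ℝ) * (r : ℝ) ^ (-(i + 1 : ℤ))) (x k j) ∧
      (∀ i < D, d k i = d n i) :=
  fejer_monotone_digit_stability_vector_general r D m hr x xs hfejer hxs n hn
end

section
/- Let r ≥ 2 be an integer radix. Let f : ℝ → ℝ be Lipschitz continuous with constant L < 1 (contractive), with fixed point x* = f(x*) satisfying |x*| < 1, and let (x_k)_{k∈ℕ} be iterates with x_{k+1} = f(x_k) for all k. Then for every number of digits D ≥ 1 there exists an index k̂ and a choice of symmetric maximally redundant signed-digit radix-r representations of the iterates from index k̂ onward in which the first D digits are stable: there exist digit sequences d^{(k)} : ℕ → ℤ for each k ≥ k̂ with |d^{(k)}_i| ≤ r − 1 for all i, x_k = Σ_{i=0}^∞ d^{(k)}_i · r^{-(i+1)}, and d^{(k)}_i = d^{(k̂)}_i for all i < D and all k ≥ k̂. -/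
/-!
Expand the fixed point greedily: as long as the remainder `s` lies in `(-1, 1)`, so does
`r * s - d` for the digit `d` nearest to `r * s`. Hence the first `D` digits of `x*` give a partial
sum `P` with `|x* - P| < r^(-D)` strictly. Once `|x_k - x*| < r^(-D) - |x* - P|`, the rescaled
error `r^D (x_k - P)` again lies in `(-1, 1)`; its expansion, written after those `D` digits,
represents `x_k`.
-/

open Finset Filter Topology

theorem dist_iterate_le_of_contraction {α : Type*} [PseudoMetricSpace α] {f : α → α} {L : ℝ}
    (hL0 : 0 ≤ L) (hLip : ∀ a b, dist (f a) (f b) ≤ L * dist a b) {xs : α} (hfix : f xs = xs)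
    {x : ℕ → α} (hx : ∀ k, x (k + 1) = f (x k)) (k : ℕ) :
    dist (x k) xs ≤ L ^ k * dist (x 0) xs := by
  induction k with
  | zero => simp
  | succ k ih =>
    calc dist (x (k + 1)) xs = dist (f (x k)) (f xs) := by rw [hx, hfix]
      _ ≤ L * dist (x k) xs := hLip _ _
      _ ≤ L * (L ^ k * dist (x 0) xs) := by gcongr
      _ = L ^ (k + 1) * dist (x 0) xs := by ring

theorem tendsto_of_contraction {α : Type*} [PseudoMetricSpace α] {f : α → α} {L : ℝ}
    (hL0 : 0 ≤ L) (hL : L < 1) (hLip : ∀ a b, dist (f a) (f b) ≤ L * dist a b) {xs : α}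
    (hfix : f xs = xs) {x : ℕ → α} (hx : ∀ k, x (k + 1) = f (x k)) :
    Tendsto x atTop (𝓝 xs) := by
  rw [tendsto_iff_dist_tendsto_zero]
  refine squeeze_zero (fun _ ↦ dist_nonneg) (dist_iterate_le_of_contraction hL0 hLip hfix hx) ?_
  simpa using (tendsto_pow_atTop_nhds_zero_of_lt_one hL0 hL).mul_const (dist (x 0) xs)

namespace SignedDigit

noncomputable def digit (r : ℕ) (s : ℝ) : ℤ :=
  max (1 - r) (min (r - 1) (round (r * s)))

noncomputable def remainder (r : ℕ) (y : ℝ) : ℕ → ℝ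
  | 0 => y
  | n + 1 => r * remainder r y n - digit r (remainder r y n)

noncomputable def digits (r : ℕ) (y : ℝ) (i : ℕ) : ℤ :=
  digit r (remainder r y i)

noncomputable def term (r : ℕ) (d : ℕ → ℤ) (i : ℕ) : ℝ :=
  d i * (r : ℝ) ^ (-(i + 1 : ℤ))

theorem abs_digit_le {r : ℕ} (hr : 1 ≤ r) (s : ℝ) : |digit r s| ≤ r - 1 := by
  rw [abs_le, digit]
  constructor <;> omega

theorem abs_mul_sub_digit_lt {r : ℕ} (hr : 1 ≤ r) {s : ℝ} (hs : |s| < 1) :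
    |r * s - digit r s| < 1 := by
  have hr' : (1 : ℝ) ≤ r := by exact_mod_cast hr
  have hround := abs_le.1 (abs_sub_round ((r : ℝ) * s))
  have hrs : |(r : ℝ) * s| < r := by
    rw [abs_mul, Nat.abs_cast]; exact mul_lt_of_lt_one_right (by positivity) hs
  rw [abs_lt] at hrs ⊢
  push_cast [digit]
  constructor <;>
    rcases max_cases (1 - (r : ℝ)) (min ((r : ℝ) - 1) (round ((r : ℝ) * s) : ℝ)) with h | h <;>
    rcases min_cases ((r : ℝ) - 1) (round ((r : ℝ) * s) : ℝ) with h' | h' <;>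
    linarith [h.1, h'.1]

theorem abs_remainder_lt {r : ℕ} (hr : 1 ≤ r) {y : ℝ} (hy : |y| < 1) (n : ℕ) :
    |remainder r y n| < 1 := by
  induction n with
  | zero => exact hy
  | succ n ih => exact abs_mul_sub_digit_lt hr ih

theorem sub_sum_term_digits_eq {r : ℕ} (hr : r ≠ 0) (y : ℝ) (n : ℕ) :
    y - ∑ i ∈ range n, term r (digits r y) i = (r : ℝ) ^ (-(n : ℤ)) * remainder r y n := by
  induction n with
  | zero => simp [remainder]
  | succ n ih =>
    have hr' : (r : ℝ) ≠ 0 := by exact_mod_cast hr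
    rw [sum_range_succ, ← sub_sub, ih, remainder, term, digits]
    rw [show (-(n : ℤ)) = -((n + 1 : ℕ) : ℤ) + 1 by push_cast; ring, zpow_add_one₀ hr']
    push_cast
    ring

theorem summable_term {r : ℕ} (hr : 2 ≤ r) {d : ℕ → ℤ} (hd : ∀ i, |d i| ≤ r - 1) :
    Summable (term r d) := by
  have hr' : (1 : ℝ) < r := by exact_mod_cast hr
  have hr0 : (0 : ℝ) < r := by positivity
  refine Summable.of_norm_bounded
    (summable_geometric_of_lt_one (by positivity) (inv_lt_one_of_one_lt₀ hr')) fun i ↦ ?_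
  have hdi : |(d i : ℝ)| ≤ r := by
    rw [← Int.cast_abs]; exact_mod_cast (hd i).trans (by omega)
  calc ‖term r d i‖ = |(d i : ℝ)| * ((r : ℝ) ^ (i + 1))⁻¹ := by
        rw [term, show (-(i + 1 : ℤ)) = -((i + 1 : ℕ) : ℤ) by push_cast; ring, zpow_neg,
          zpow_natCast, Real.norm_eq_abs, abs_mul,
          abs_of_pos (a := ((r : ℝ) ^ (i + 1))⁻¹) (by positivity)]
    _ ≤ r * ((r : ℝ) ^ (i + 1))⁻¹ := by gcongr
    _ = (r : ℝ)⁻¹ ^ i := by rw [pow_succ, inv_pow]; field_simp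

theorem hasSum_term_digits {r : ℕ} (hr : 2 ≤ r) {y : ℝ} (hy : |y| < 1) :
    HasSum (term r (digits r y)) y := by
  have hr' : (1 : ℝ) < r := by exact_mod_cast hr
  rw [(summable_term hr (d := digits r y) fun i ↦ abs_digit_le (by omega) _).hasSum_iff_tendsto_nat]
  have hr0 : (0 : ℝ) < r := by positivity
  have hpartial : ∀ n, ∑ i ∈ range n, term r (digits r y) i
      = y - (r : ℝ) ^ (-(n : ℤ)) * remainder r y n := fun n ↦ by
    rw [← sub_sum_term_digits_eq (by omega), sub_sub_cancel]
  have hpow : Tendsto (fun n : ℕ ↦ (r : ℝ) ^ (-(n : ℤ))) atTop (𝓝 0) := by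
    simpa only [zpow_neg, zpow_natCast, Function.comp_def] using
      tendsto_inv_atTop_zero.comp (tendsto_pow_atTop_atTop_of_one_lt hr')
  have herr : Tendsto (fun n : ℕ ↦ (r : ℝ) ^ (-(n : ℤ)) * remainder r y n) atTop (𝓝 0) := by
    refine squeeze_zero_norm (fun n ↦ ?_) hpow
    rw [norm_mul, Real.norm_eq_abs, Real.norm_eq_abs, abs_of_pos (by positivity)]
    exact mul_le_of_le_one_right (by positivity) (abs_remainder_lt (by omega) hy n).le
  simpa only [hpartial, sub_zero] using tendsto_const_nhds.sub herr

def concat (e g : ℕ → ℤ) (D i : ℕ) : ℤ :=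
  if i < D then e i else g (i - D)

theorem concat_of_lt {e g : ℕ → ℤ} {D i : ℕ} (hi : i < D) : concat e g D i = e i :=
  if_pos hi

theorem abs_concat_le {e g : ℕ → ℤ} {C : ℤ} (he : ∀ i, |e i| ≤ C) (hg : ∀ i, |g i| ≤ C)
    (D i : ℕ) : |concat e g D i| ≤ C := by
  unfold concat
  split_ifs
  exacts [he i, hg (i - D)]

theorem hasSum_term_concat {r : ℕ} (hr : r ≠ 0) (e : ℕ → ℤ) {g : ℕ → ℤ} {z : ℝ}
    (hg : HasSum (term r g) z) (D : ℕ) :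
    HasSum (term r (concat e g D)) (∑ i ∈ range D, term r e i + (r : ℝ) ^ (-(D : ℤ)) * z) := by
  have hr' : (r : ℝ) ≠ 0 := by exact_mod_cast hr
  have hhead : ∑ i ∈ range D, term r (concat e g D) i = ∑ i ∈ range D, term r e i :=
    sum_congr rfl fun i hi ↦ by rw [term, term, concat_of_lt (mem_range.1 hi)]
  have htail :
      (fun n ↦ term r (concat e g D) (n + D)) = fun n ↦ (r : ℝ) ^ (-(D : ℤ)) * term r g n := by
    ext n
    rw [term, term, concat, if_neg (by omega), Nat.add_sub_cancel, ← mul_left_comm, ← zpow_add₀ hr']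
    push_cast
    ring_nf
  rw [← hasSum_nat_add_iff' D, hhead, add_sub_cancel_left, htail]
  exact hg.mul_left _

end SignedDigit

open SignedDigit in
/-- Theorem 3 of the paper: for a fixed-point iteration of a
contractive function `f : ℝ → ℝ` (Lipschitz with constant `L < 1`) whose fixed
point `xs` satisfies `|xs| < 1`, for every number of digits `D ≥ 1` there is an
index `k̂` from which the first `D` digits of the iterates are stable in some
choice of symmetric maximally redundant signed-digit radix-`r` representations. -/
theorem contractive_iteration_digit_stability
    (r : ℕ) (hr : 2 ≤ r)
    (f : ℝ → ℝ) (L : ℝ) (hL : L < 1)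
    (hLip : ∀ a b : ℝ, |f a - f b| ≤ L * |a - b|)
    (xs : ℝ) (hfix : f xs = xs) (hxs : |xs| < 1)
    (x : ℕ → ℝ) (hx : ∀ k : ℕ, x (k + 1) = f (x k)) :
    ∀ D : ℕ, 1 ≤ D →
      ∃ khat : ℕ, ∃ d : ℕ → ℕ → ℤ, ∀ k : ℕ, khat ≤ k →
        (∀ i, |d k i| ≤ (r : ℤ) - 1) ∧
        HasSum (fun i : ℕ => (d k i : ℝ) * (r : ℝ) ^ (-(i + 1 : ℤ))) (x k) ∧
        (∀ i < D, d k i = d khat i) := by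
  intro D _
  have hr0 : (0 : ℝ) < r := by positivity
  have hL0 : 0 ≤ L := (abs_nonneg _).trans (by simpa using hLip 1 0)
  set P := ∑ i ∈ range D, term r (digits r xs) i
  have hP : |xs - P| < (r : ℝ) ^ (-(D : ℤ)) := by
    rw [sub_sum_term_digits_eq (by omega), abs_mul, abs_of_pos (by positivity)]
    exact mul_lt_of_lt_one_right (by positivity) (abs_remainder_lt (by omega) hxs D)
  have hconv := tendsto_of_contraction hL0 hL (by simpa only [Real.dist_eq] using hLip) hfix hx
  obtain ⟨khat, hkhat⟩ := Metric.tendsto_atTop.1 hconv _ (sub_pos.2 hP)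
  refine ⟨khat, fun k ↦ concat (digits r xs) (digits r ((r : ℝ) ^ (D : ℤ) * (x k - P))) D,
    fun k hk ↦ ⟨abs_concat_le (fun _ ↦ abs_digit_le (by omega) _)
      (fun _ ↦ abs_digit_le (by omega) _) D,
      ?_, fun i hi ↦ by simp only [concat_of_lt hi]⟩⟩
  have hxk : |x k - P| < (r : ℝ) ^ (-(D : ℤ)) := by
    have := hkhat k hk
    rw [Real.dist_eq] at this
    linarith [abs_sub_le (x k) xs P]
  have hz : |(r : ℝ) ^ (D : ℤ) * (x k - P)| < 1 := by
    rw [abs_mul, abs_of_pos (by positivity), ← mul_inv_cancel₀ (zpow_ne_zero D hr0.ne'), ← zpow_neg]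
    gcongr
  have h := hasSum_term_concat (by omega) (digits r xs) (hasSum_term_digits hr hz) D
  rwa [← mul_assoc, ← zpow_add₀ hr0.ne', neg_add_cancel, zpow_zero, one_mul, add_sub_cancel] at h
end
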